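/- Cut-free completeness by induction on size: for every n and sequent Γ, Δ with sizes Γ Δ ≤ n, if Γ semantically entails Δ (every valuation satisfying Γ validates Δ), then Γ ⊃c Δ is derivable in the cut-free sequent calculus. -/

import Mathlib

inductive PropF (V : Type) : Type
  | Var : V → PropF V
  | Bot : PropF V
  | Conj : PropF V → PropF V → PropF V
  | Disj : PropF V → PropF V → PropF V
  | Impl : PropF V → PropF V → PropF V
deriving DecidableEq

variable {V : Type} [DecidableEq V]

def PropF.Neg (A : PropF V) : PropF V := A.Impl .Bot
def PropF.Top : PropF V := PropF.Neg .Bot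

def TrueQ (v : V → Bool) : PropF V → Bool
  | .Var p => v p
  | .Bot => false
  | .Conj B C => TrueQ v B && TrueQ v C
  | .Disj B C => TrueQ v B || TrueQ v C
  | .Impl B C => !(TrueQ v B) || TrueQ v C

def Satisfies (v : V → Bool) (Γ : List (PropF V)) : Prop := ∀ A ∈ Γ, TrueQ v A = true
def Models (Γ : List (PropF V)) (A : PropF V) : Prop := ∀ v, Satisfies v Γ → TrueQ v A = true
def Valid (A : PropF V) : Prop := Models [] A
def Validates (v : V → Bool) (Δ : List (PropF V)) : Prop := ∃ A ∈ Δ, TrueQ v A = true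

inductive Nc : List (PropF V) → PropF V → Prop
  | Nax (Γ : List (PropF V)) (A : PropF V) : A ∈ Γ → Nc Γ A
  | ImpI (Γ : List (PropF V)) (A B : PropF V) : Nc (A :: Γ) B → Nc Γ (A.Impl B)
  | ImpE (Γ : List (PropF V)) (A B : PropF V) : Nc Γ (A.Impl B) → Nc Γ A → Nc Γ B
  | BotC (Γ : List (PropF V)) (A : PropF V) : Nc (A.Neg :: Γ) .Bot → Nc Γ A
  | AndI (Γ : List (PropF V)) (A B : PropF V) : Nc Γ A → Nc Γ B → Nc Γ (A.Conj B)
  | AndE1 (Γ : List (PropF V)) (A B : PropF V) : Nc Γ (A.Conj B) → Nc Γ A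
  | AndE2 (Γ : List (PropF V)) (A B : PropF V) : Nc Γ (A.Conj B) → Nc Γ B
  | OrI1 (Γ : List (PropF V)) (A B : PropF V) : Nc Γ A → Nc Γ (A.Disj B)
  | OrI2 (Γ : List (PropF V)) (A B : PropF V) : Nc Γ B → Nc Γ (A.Disj B)
  | OrE (Γ : List (PropF V)) (A B C : PropF V) : Nc Γ (A.Disj B) → Nc (A :: Γ) C → Nc (B :: Γ) C → Nc Γ C

def Provable (A : PropF V) : Prop := Nc [] A

inductive NNF (V : Type) : Type
  | NPos : V → NNF V
  | NNeg : V → NNF V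
  | NBot : NNF V
  | NTop : NNF V
  | NConj : NNF V → NNF V → NNF V
  | NDisj : NNF V → NNF V → NNF V
deriving DecidableEq

def NNFtoPropF : NNF V → PropF V
  | .NPos p => .Var p
  | .NNeg p => (PropF.Var p).Neg
  | .NBot => .Bot
  | .NTop => PropF.Top
  | .NConj B C => (NNFtoPropF B).Conj (NNFtoPropF C)
  | .NDisj B C => (NNFtoPropF B).Disj (NNFtoPropF C)

mutual
def MakeNNF : PropF V → NNF V
  | .Var p => .NPos p
  | .Bot => .NBot
  | .Disj B C => .NDisj (MakeNNF B) (MakeNNF C)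
  | .Conj B C => .NConj (MakeNNF B) (MakeNNF C)
  | .Impl B C => .NDisj (MakeNNFN B) (MakeNNF C)
def MakeNNFN : PropF V → NNF V
  | .Var p => .NNeg p
  | .Bot => .NTop
  | .Disj B C => .NConj (MakeNNFN B) (MakeNNFN C)
  | .Conj B C => .NDisj (MakeNNFN B) (MakeNNFN C)
  | .Impl B C => .NConj (MakeNNF B) (MakeNNFN C)
end

inductive Lit (V : Type) : Type
  | LPos : V → Lit V
  | LNeg : V → Lit V
  | LBot : Lit V
  | LTop : Lit V
deriving DecidableEq

def LiteraltoPropF : Lit V → PropF V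
  | .LPos p => .Var p
  | .LNeg p => (PropF.Var p).Neg
  | .LBot => .Bot
  | .LTop => PropF.Top

abbrev Clause (V : Type) : Type := List (Lit V)
abbrev CNF (V : Type) : Type := List (Clause V)

abbrev ClausetoPropF (l : Clause V) : PropF V :=
  l.foldr (fun a r => (LiteraltoPropF a).Disj r) .Bot

def CNFtoPropF (ll : CNF V) : PropF V :=
  ll.foldr (fun c r => (ClausetoPropF c).Conj r) PropF.Top

def AddClause (l : Clause V) (ll : CNF V) : CNF V := ll.map (fun l2 => l ++ l2)
def Disjunct (ll ll2 : CNF V) : CNF V := ll.flatMap (fun l => AddClause l ll2)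

def MakeCNF : NNF V → CNF V
  | .NPos p => [[.LPos p]]
  | .NNeg p => [[.LNeg p]]
  | .NBot => [[.LBot]]
  | .NTop => [[.LTop]]
  | .NConj B C => MakeCNF B ++ MakeCNF C
  | .NDisj B C => Disjunct (MakeCNF B) (MakeCNF C)

def Valid_Clause (l : Clause V) : Prop :=
  Lit.LTop ∈ l ∨ ∃ p, Lit.LPos p ∈ l ∧ Lit.LNeg p ∈ l
def Valid_CNF (ll : CNF V) : Prop := ∀ l ∈ ll, Valid_Clause l

inductive AxiomH : PropF V → Prop
  | HOrI1 (A B : PropF V) : AxiomH (A.Impl (A.Disj B))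
  | HOrI2 (A B : PropF V) : AxiomH (B.Impl (A.Disj B))
  | HAndI (A B : PropF V) : AxiomH (A.Impl (B.Impl (A.Conj B)))
  | HOrE (A B C : PropF V) : AxiomH ((A.Disj B).Impl ((A.Impl C).Impl ((B.Impl C).Impl C)))
  | HAndE1 (A B : PropF V) : AxiomH ((A.Conj B).Impl A)
  | HAndE2 (A B : PropF V) : AxiomH ((A.Conj B).Impl B)
  | HS (A B C : PropF V) : AxiomH ((A.Impl (B.Impl C)).Impl ((A.Impl B).Impl (A.Impl C)))
  | HK (A B : PropF V) : AxiomH (A.Impl (B.Impl A))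
  | HClas (A : PropF V) : AxiomH ((A.Neg.Neg).Impl A)

inductive Hc : List (PropF V) → PropF V → Prop
  | Hass (A : PropF V) (Γ : List (PropF V)) : A ∈ Γ → Hc Γ A
  | Hax (A : PropF V) (Γ : List (PropF V)) : AxiomH A → Hc Γ A
  | HImpE (Γ : List (PropF V)) (A B : PropF V) : Hc Γ (A.Impl B) → Hc Γ A → Hc Γ B

inductive G : List (PropF V) → List (PropF V) → Prop
  | Gax (A : PropF V) (Γ Δ : List (PropF V)) : A ∈ Γ → A ∈ Δ → G Γ Δ
  | GBot (Γ Δ : List (PropF V)) : PropF.Bot ∈ Γ → G Γ Δ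
  | AndL (A B : PropF V) (Γ1 Γ2 Δ : List (PropF V)) : G (Γ1 ++ A :: B :: Γ2) Δ → G (Γ1 ++ (A.Conj B) :: Γ2) Δ
  | AndR (A B : PropF V) (Γ Δ1 Δ2 : List (PropF V)) : G Γ (Δ1 ++ A :: Δ2) → G Γ (Δ1 ++ B :: Δ2) → G Γ (Δ1 ++ (A.Conj B) :: Δ2)
  | OrL (A B : PropF V) (Γ1 Γ2 Δ : List (PropF V)) : G (Γ1 ++ A :: Γ2) Δ → G (Γ1 ++ B :: Γ2) Δ → G (Γ1 ++ (A.Disj B) :: Γ2) Δ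
  | OrR (A B : PropF V) (Γ Δ1 Δ2 : List (PropF V)) : G Γ (Δ1 ++ A :: B :: Δ2) → G Γ (Δ1 ++ (A.Disj B) :: Δ2)
  | ImpL (A B : PropF V) (Γ1 Γ2 Δ : List (PropF V)) : G (Γ1 ++ B :: Γ2) Δ → G (Γ1 ++ Γ2) (A :: Δ) → G (Γ1 ++ (A.Impl B) :: Γ2) Δ
  | ImpR (A B : PropF V) (Γ Δ1 Δ2 : List (PropF V)) : G (A :: Γ) (Δ1 ++ B :: Δ2) → G Γ (Δ1 ++ (A.Impl B) :: Δ2)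
  | Cut (A : PropF V) (Γ Δ : List (PropF V)) : G Γ (A :: Δ) → G (A :: Γ) Δ → G Γ Δ

inductive Gcf : List (PropF V) → List (PropF V) → Prop
  | Gax (p : V) (Γ Δ : List (PropF V)) : PropF.Var p ∈ Γ → PropF.Var p ∈ Δ → Gcf Γ Δ
  | GBot (Γ Δ : List (PropF V)) : PropF.Bot ∈ Γ → Gcf Γ Δ
  | AndL (A B : PropF V) (Γ1 Γ2 Δ : List (PropF V)) : Gcf (Γ1 ++ A :: B :: Γ2) Δ → Gcf (Γ1 ++ (A.Conj B) :: Γ2) Δ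
  | AndR (A B : PropF V) (Γ Δ1 Δ2 : List (PropF V)) : Gcf Γ (Δ1 ++ A :: Δ2) → Gcf Γ (Δ1 ++ B :: Δ2) → Gcf Γ (Δ1 ++ (A.Conj B) :: Δ2)
  | OrL (A B : PropF V) (Γ1 Γ2 Δ : List (PropF V)) : Gcf (Γ1 ++ A :: Γ2) Δ → Gcf (Γ1 ++ B :: Γ2) Δ → Gcf (Γ1 ++ (A.Disj B) :: Γ2) Δ
  | OrR (A B : PropF V) (Γ Δ1 Δ2 : List (PropF V)) : Gcf Γ (Δ1 ++ A :: B :: Δ2) → Gcf Γ (Δ1 ++ (A.Disj B) :: Δ2)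
  | ImpL (A B : PropF V) (Γ1 Γ2 Δ : List (PropF V)) : Gcf (Γ1 ++ B :: Γ2) Δ → Gcf (Γ1 ++ Γ2) (A :: Δ) → Gcf (Γ1 ++ (A.Impl B) :: Γ2) Δ
  | ImpR (A B : PropF V) (Γ Δ1 Δ2 : List (PropF V)) : Gcf (A :: Γ) (Δ1 ++ B :: Δ2) → Gcf Γ (Δ1 ++ (A.Impl B) :: Δ2)

def BigOr (Δ : List (PropF V)) : PropF V := Δ.foldr PropF.Disj .Bot

def size : PropF V → Nat
  | .Var _ => 0
  | .Bot => 0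
  | .Conj B C => (size B + size C).succ
  | .Disj B C => (size B + size C).succ
  | .Impl B C => (size B + size C).succ

def sizel (Γ : List (PropF V)) : Nat := (Γ.map size).sum
def sizes (Γ Δ : List (PropF V)) : Nat := sizel Γ + sizel Δ

/-!
Every rule of `Gcf` other than the axioms is semantically invertible: a valuation refuting a
premise refutes the conclusion. Hence a valid sequent containing a compound formula reduces, by
the rule for that formula, to valid premises of strictly smaller size. A valid sequent of atoms
either has `⊥` on the left or, under the valuation making exactly the variables on the left true,
has one of them on the right.
-/

section

variable {V : Type}

def PropF.IsAtomic : PropF V → Prop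
  | .Var _ | .Bot => True
  | _ => False

def Entails (Γ Δ : List (PropF V)) : Prop := ∀ v, Satisfies v Γ → Validates v Δ

variable {v : V → Bool} {Γ Γ1 Γ2 Δ Δ1 Δ2 : List (PropF V)} {A B : PropF V}

theorem satisfies_cons_iff : Satisfies v (A :: Γ) ↔ TrueQ v A = true ∧ Satisfies v Γ :=
  List.forall_mem_cons

theorem validates_cons_iff : Validates v (A :: Δ) ↔ TrueQ v A = true ∨ Validates v Δ := by
  simp [Validates]

theorem satisfies_middle_iff :
    Satisfies v (Γ1 ++ A :: Γ2) ↔ TrueQ v A = true ∧ Satisfies v (Γ1 ++ Γ2) := by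
  rw [← satisfies_cons_iff]
  simp only [Satisfies, List.perm_middle.mem_iff]

theorem validates_middle_iff :
    Validates v (Δ1 ++ A :: Δ2) ↔ TrueQ v A = true ∨ Validates v (Δ1 ++ Δ2) := by
  rw [← validates_cons_iff]
  simp only [Validates, List.perm_middle.mem_iff]

theorem sizel_cons : sizel (A :: Γ) = size A + sizel Γ := by
  simp [sizel]

theorem sizel_middle : sizel (Γ1 ++ A :: Γ2) = size A + sizel (Γ1 ++ Γ2) := by
  simp only [sizel, List.map_append, List.map_cons, List.sum_append, List.sum_cons]
  omega

namespace Entails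

theorem andL_inv (h : Entails (Γ1 ++ A.Conj B :: Γ2) Δ) : Entails (Γ1 ++ A :: B :: Γ2) Δ :=
  fun v hv => h v (by simp_all [satisfies_middle_iff, TrueQ])

theorem orL_inv_left (h : Entails (Γ1 ++ A.Disj B :: Γ2) Δ) : Entails (Γ1 ++ A :: Γ2) Δ :=
  fun v hv => h v (by simp_all [satisfies_middle_iff, TrueQ])

theorem orL_inv_right (h : Entails (Γ1 ++ A.Disj B :: Γ2) Δ) : Entails (Γ1 ++ B :: Γ2) Δ :=
  fun v hv => h v (by simp_all [satisfies_middle_iff, TrueQ])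

theorem impL_inv_left (h : Entails (Γ1 ++ A.Impl B :: Γ2) Δ) : Entails (Γ1 ++ B :: Γ2) Δ :=
  fun v hv => h v (by simp_all [satisfies_middle_iff, TrueQ])

theorem impL_inv_right (h : Entails (Γ1 ++ A.Impl B :: Γ2) Δ) : Entails (Γ1 ++ Γ2) (A :: Δ) := by
  intro v hv
  rw [validates_cons_iff]
  cases hA : TrueQ v A
  · exact .inr <| h v (satisfies_middle_iff.2 ⟨by simp [TrueQ, hA], hv⟩)
  · exact .inl rfl

theorem andR_inv_left (h : Entails Γ (Δ1 ++ A.Conj B :: Δ2)) : Entails Γ (Δ1 ++ A :: Δ2) := by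
  intro v hv
  have := h v hv
  simp only [validates_middle_iff, TrueQ, Bool.and_eq_true] at this ⊢
  tauto

theorem andR_inv_right (h : Entails Γ (Δ1 ++ A.Conj B :: Δ2)) : Entails Γ (Δ1 ++ B :: Δ2) := by
  intro v hv
  have := h v hv
  simp only [validates_middle_iff, TrueQ, Bool.and_eq_true] at this ⊢
  tauto

theorem orR_inv (h : Entails Γ (Δ1 ++ A.Disj B :: Δ2)) : Entails Γ (Δ1 ++ A :: B :: Δ2) := by
  intro v hv
  have := h v hv
  simp only [validates_middle_iff, TrueQ, Bool.or_eq_true] at this ⊢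
  tauto

theorem impR_inv (h : Entails Γ (Δ1 ++ A.Impl B :: Δ2)) : Entails (A :: Γ) (Δ1 ++ B :: Δ2) := by
  intro v hv
  rw [satisfies_cons_iff] at hv
  have := h v hv.2
  simp_all [validates_middle_iff, TrueQ]

end Entails

theorem Gcf.of_entails_of_isAtomic (hΓ : ∀ A ∈ Γ, A.IsAtomic) (hΔ : ∀ A ∈ Δ, A.IsAtomic)
    (h : Entails Γ Δ) : Gcf Γ Δ := by
  classical
  by_cases hBot : PropF.Bot ∈ Γ
  · exact .GBot Γ Δ hBot
  let v : V → Bool := fun p => decide (PropF.Var p ∈ Γ)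
  have hv : Satisfies v Γ := by
    intro A hA
    cases A with
    | Var p => simpa [v, TrueQ] using hA
    | Bot => exact absurd hA hBot
    | Conj | Disj | Impl => exact False.elim (hΓ _ hA)
  obtain ⟨A, hA, hTrue⟩ := h v hv
  cases A with
  | Var p => exact .Gax p Γ Δ (by simpa [v, TrueQ] using hTrue) hA
  | Bot => simp [TrueQ] at hTrue
  | Conj | Disj | Impl => exact False.elim (hΔ _ hA)

theorem Gcf.of_entails (Γ Δ : List (PropF V)) (h : Entails Γ Δ) : Gcf Γ Δ := by
  by_cases hΓ : ∀ A ∈ Γ, A.IsAtomic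
  · by_cases hΔ : ∀ A ∈ Δ, A.IsAtomic
    · exact .of_entails_of_isAtomic hΓ hΔ h
    push Not at hΔ
    obtain ⟨A, hA, hAt⟩ := hΔ
    obtain ⟨Δ1, Δ2, rfl⟩ := List.mem_iff_append.1 hA
    cases A with
    | Var | Bot => exact absurd trivial hAt
    | Conj B C =>
      exact .AndR B C Γ Δ1 Δ2 (.of_entails _ _ h.andR_inv_left) (.of_entails _ _ h.andR_inv_right)
    | Disj B C => exact .OrR B C Γ Δ1 Δ2 (.of_entails _ _ h.orR_inv)
    | Impl B C => exact .ImpR B C Γ Δ1 Δ2 (.of_entails _ _ h.impR_inv)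
  push Not at hΓ
  obtain ⟨A, hA, hAt⟩ := hΓ
  obtain ⟨Γ1, Γ2, rfl⟩ := List.mem_iff_append.1 hA
  cases A with
  | Var | Bot => exact absurd trivial hAt
  | Conj B C => exact .AndL B C Γ1 Γ2 Δ (.of_entails _ _ h.andL_inv)
  | Disj B C =>
    exact .OrL B C Γ1 Γ2 Δ (.of_entails _ _ h.orL_inv_left) (.of_entails _ _ h.orL_inv_right)
  | Impl B C =>
    exact .ImpL B C Γ1 Γ2 Δ (.of_entails _ _ h.impL_inv_left) (.of_entails _ _ h.impL_inv_right)
termination_by sizes Γ Δ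
decreasing_by all_goals subst_vars; simp only [sizes, sizel_cons, sizel_middle, size]; omega

end

theorem stmt17 {V : Type} [DecidableEq V] (n : ℕ) (Γ Δ : List (PropF V))
    (hs : sizes Γ Δ ≤ n) (h : ∀ v, Satisfies v Γ → Validates v Δ) : Gcf Γ Δ := Gcf.of_entails Γ Δ h
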